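/- Annotatability (completeness of the bidirectional system with respect to type assignment): for every typing context Γ, term e, and simple type A, if Γ ⊢ e : A is derivable in the type assignment system, then (1) there exists a term e′ with e′ ⊒ e such that Γ ⊢ e′ ⇐ A is derivable in the bidirectional system, and (2) there exists a term e″ with e″ ⊒ e such that Γ ⊢ e″ ⇒ A is derivable in the bidirectional system. -/
import Mathlib

/-- Simple types: `unit` and function types. -/
inductive Ty : Type
  | unit : Ty
  | arr : Ty → Ty → Ty
deriving DecidableEq

/-- Terms (de Bruijn indices): variables, λ-abstraction, application,
    the unit term `()`, and type annotations `(e : A)`. -/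
inductive Tm : Type
  | var : Nat → Tm
  | lam : Tm → Tm
  | app : Tm → Tm → Tm
  | unit : Tm
  | anno : Tm → Ty → Tm
deriving DecidableEq

/-- Type assignment system `Γ ⊢ e : A`.  Contexts are lists of types,
    indexed by de Bruijn variables. -/
inductive Assign : List Ty → Tm → Ty → Prop
  | var {Γ : List Ty} {n : Nat} {A : Ty} :
      Γ[n]? = some A → Assign Γ (.var n) A
  | anno {Γ e A} :
      Assign Γ e A → Assign Γ (.anno e A) A
  | unit {Γ} : Assign Γ .unit .unit
  | lam {Γ e A₁ A₂} :
      Assign (A₁ :: Γ) e A₂ → Assign Γ (.lam e) (.arr A₁ A₂)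
  | app {Γ e₁ e₂ A B} :
      Assign Γ e₁ (.arr A B) → Assign Γ e₂ A → Assign Γ (.app e₁ e₂) B

mutual
  /-- Synthesis judgment `Γ ⊢ e ⇒ A`. -/
  inductive Syn : List Ty → Tm → Ty → Prop
    | var {Γ : List Ty} {n : Nat} {A : Ty} :
        Γ[n]? = some A → Syn Γ (.var n) A
    | anno {Γ e A} :
        Chk Γ e A → Syn Γ (.anno e A) A
    | app {Γ e₁ e₂ A B} :
        Syn Γ e₁ (.arr A B) → Chk Γ e₂ A → Syn Γ (.app e₁ e₂) B

  /-- Checking judgment `Γ ⊢ e ⇐ A`. -/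
  inductive Chk : List Ty → Tm → Ty → Prop
    | sub {Γ e A B} :
        Syn Γ e A → A = B → Chk Γ e B
    | unit {Γ} : Chk Γ .unit .unit
    | lam {Γ e A₁ A₂} :
        Chk (A₁ :: Γ) e A₂ → Chk Γ (.lam e) (.arr A₁ A₂)
end

/-- `MoreAnno e' e` means `e' ⊒ e`: `e'` is a more annotated version of `e`.
    It is reflexive, allows adding annotations, and is closed under congruence
    through every term constructor. -/
inductive MoreAnno : Tm → Tm → Prop
  | refl (e : Tm) : MoreAnno e e
  | addAnno {e' e : Tm} (A : Ty) : MoreAnno e' e → MoreAnno (.anno e' A) e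
  | lam {e' e : Tm} : MoreAnno e' e → MoreAnno (.lam e') (.lam e)
  | app {e₁' e₁ e₂' e₂ : Tm} :
      MoreAnno e₁' e₁ → MoreAnno e₂' e₂ → MoreAnno (.app e₁' e₂') (.app e₁ e₂)
  | anno {e' e : Tm} (A : Ty) : MoreAnno e' e → MoreAnno (.anno e' A) (.anno e A)

/-- Annotatability: completeness of the bidirectional system
    w.r.t. type assignment, up to adding annotations. -/
theorem annotatability (Γ : List Ty) (e : Tm) (A : Ty) (h : Assign Γ e A) :
    (∃ e' : Tm, MoreAnno e' e ∧ Chk Γ e' A) ∧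
    (∃ e'' : Tm, MoreAnno e'' e ∧ Syn Γ e'' A) := by
  induction h with
  | var h =>
    exact ⟨⟨_, .refl _, .sub (.var h) rfl⟩, ⟨_, .refl _, .var h⟩⟩
  | anno h ih =>
    obtain ⟨⟨e', hm, hc⟩, _⟩ := ih
    exact ⟨⟨_, .anno _ hm, .sub (.anno hc) rfl⟩, ⟨_, .anno _ hm, .anno hc⟩⟩
  | unit =>
    exact ⟨⟨_, .refl _, .unit⟩,
      ⟨.anno .unit .unit, .addAnno _ (.refl _), .anno .unit⟩⟩
  | lam h ih =>
    obtain ⟨⟨e', hm, hc⟩, _⟩ := ih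
    exact ⟨⟨_, .lam hm, .lam hc⟩,
      ⟨_, .addAnno _ (.lam hm), .anno (.lam hc)⟩⟩
  | app h1 h2 ih1 ih2 =>
    obtain ⟨_, ⟨e₁', hm1, hs1⟩⟩ := ih1
    obtain ⟨⟨e₂', hm2, hc2⟩, _⟩ := ih2
    exact ⟨⟨_, .app hm1 hm2, .sub (.app hs1 hc2) rfl⟩,
      ⟨_, .app hm1 hm2, .app hs1 hc2⟩⟩
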